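/- Let M be a compact metric space, φ: M → M continuous, G = {G_n} an asymptotically additive sequence, and P a Borel probability measure on M with supp(P) = M. Assume that for every ε > 0 there are constants K_n(ε) ≥ 1 with lim_{ε↓0} limsup_n (1/n) log K_n(ε) = 0 such that for every n ≥ 1 the two-sided bound K_n(ε)^{−1} e^{G_n(x) − n p_φ(G)} ≤ P(B_n(x,ε)) ≤ K_n(ε) e^{G_n(x) − n p_φ(G)} holds for P-almost every x ∈ M. Then P is a weak Gibbs measure for G, i.e., the same type of bounds (with possibly modified constants K'_n(ε) still satisfying lim_{ε↓0} limsup_n (1/n) log K'_n(ε) = 0) hold for every x ∈ M. -/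

import Mathlib

open MeasureTheory Filter Topology Set
open scoped ENNReal

variable {M : Type*} [MetricSpace M] [CompactSpace M] [MeasurableSpace M] [BorelSpace M]

/-- Birkhoff sum `S_n V = ∑_{j<n} V ∘ φ^j`. -/
noncomputable def birkhoff (φ : M → M) (V : M → ℝ) (n : ℕ) (x : M) : ℝ :=
  ∑ j ∈ Finset.range n, V (φ^[j] x)

/-- Supremum norm `‖f‖_∞` valued in `ℝ≥0∞`. -/
noncomputable def supNorm (f : M → ℝ) : ℝ≥0∞ :=
  ⨆ x : M, ENNReal.ofReal |f x|

/-- `Gk` is an approximating sequence for `G`: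
`lim_{k→∞} limsup_{n→∞} (1/n) ‖G_n − S_n G^{(k)}‖_∞ = 0`. -/
def ApproxSeq (φ : M → M) (G : ℕ → M → ℝ) (Gk : ℕ → M → ℝ) : Prop :=
  Tendsto
    (fun k => Filter.limsup
      (fun n => supNorm (fun x => G n x - birkhoff φ (Gk k) n x) / (n : ℝ≥0∞)) atTop)
    atTop (nhds 0)

/-- `G = {G_n}` is an asymptotically additive sequence of bounded Borel functions. -/
def AsympAdd (φ : M → M) (G : ℕ → M → ℝ) : Prop :=
  (∀ n, Measurable (G n) ∧ ∃ C : ℝ, ∀ x, |G n x| ≤ C) ∧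
  ∃ Gk : ℕ → M → ℝ, (∀ k, Continuous (Gk k)) ∧ ApproxSeq φ G Gk

/-- Bowen ball `B_n(x, ε)`. -/
def bowenBall (φ : M → M) (n : ℕ) (x : M) (ε : ℝ) : Set M :=
  {y | ∀ k < n, dist (φ^[k] y) (φ^[k] x) < ε}

/-- `E` is `(ε,n)`-spanning. -/
def IsSpanning (φ : M → M) (n : ℕ) (ε : ℝ) (E : Finset M) : Prop :=
  ∀ x : M, ∃ y ∈ E, x ∈ bowenBall φ n y ε

/-- `E` is `(ε,n)`-separated. -/
def IsSeparated (φ : M → M) (n : ℕ) (ε : ℝ) (E : Finset M) : Prop :=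
  ∀ x ∈ E, ∀ y ∈ E, x ≠ y → x ∉ bowenBall φ n y ε

/-- `S(G,ε,n)`. -/
noncomputable def spanSum (φ : M → M) (G : ℕ → M → ℝ) (ε : ℝ) (n : ℕ) : ℝ≥0∞ :=
  ⨅ (E : Finset M) (_ : IsSpanning φ n ε E), ∑ x ∈ E, ENNReal.ofReal (Real.exp (G n x))

/-- `N(G,ε,n)`. -/
noncomputable def sepSum (φ : M → M) (G : ℕ → M → ℝ) (ε : ℝ) (n : ℕ) : ℝ≥0∞ :=
  ⨆ (E : Finset M) (_ : IsSeparated φ n ε E), ∑ x ∈ E, ENNReal.ofReal (Real.exp (G n x))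

/-- Topological pressure of an asymptotically additive sequence, via `(ε,n)`-separated sets. -/
noncomputable def pressure (φ : M → M) (G : ℕ → M → ℝ) : EReal :=
  ⨆ (ε : ℝ) (_ : 0 < ε),
    Filter.limsup (fun n : ℕ => (((n : ℝ)⁻¹ : ℝ) : EReal) * ENNReal.log (sepSum φ G ε n)) atTop

/-- Entropy of the partition of `M` induced by a map into a finite type. -/
noncomputable def mapEntropy (μ : Measure M) {α : Type} [Fintype α] (c : M → α) : ℝ :=
  ∑ a : α, Real.negMulLog ((μ (c ⁻¹' {a})).toReal)

/-- Kolmogorov–Sinai entropy of `φ` along a finite partition `P` (encoded as `P : M → Fin m`). -/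
noncomputable def partKS (φ : M → M) (μ : Measure M) {m : ℕ} (P : M → Fin m) : ℝ :=
  ⨅ n : ℕ, ((n : ℝ) + 1)⁻¹ *
    mapEntropy μ (fun x => fun i : Fin (n + 1) => P (φ^[(i : ℕ)] x))

/-- Kolmogorov–Sinai entropy `h_φ(μ)`. -/
noncomputable def ksEntropy (φ : M → M) (μ : Measure M) : ℝ≥0∞ :=
  ⨆ (m : ℕ) (P : M → Fin m) (_ : Measurable P), ENNReal.ofReal (partKS φ μ P)

/-- Set of `n`-periodic points of `φ`. -/
def perSet (φ : M → M) (n : ℕ) : Set M := {x | φ^[n] x = x}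

/-- `Z_n(G) = ∑_{x ∈ M_n} e^{G_n(x)}`, as an extended nonnegative real. -/
noncomputable def perPartition (φ : M → M) (G : ℕ → M → ℝ) (n : ℕ) : ℝ≥0∞ :=
  ∑' x : perSet φ n, ENNReal.ofReal (Real.exp (G n x))

/-- The periodic-orbit measure `P_n = Z_n⁻¹ ∑_{x ∈ M_n} e^{G_n(x)} δ_x`. -/
noncomputable def perGibbs (φ : M → M) (G : ℕ → M → ℝ) (n : ℕ) : Measure M :=
  (perPartition φ G n)⁻¹ •
    Measure.sum (fun x : perSet φ n => ENNReal.ofReal (Real.exp (G n x)) • Measure.dirac (x : M))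

/-- Weak periodic specification property. -/
def WPS (φ : M → M) : Prop :=
  ∃ m : ℝ → ℕ → ℕ, ∃ N : ℝ → ℕ,
    (∀ δ : ℝ, 0 < δ → ∀ n, N δ ≤ n → m δ n < n) ∧
    (∀ δ : ℝ, 0 < δ → ∀ n, N δ ≤ n → ∀ x : M,
      ∃ y ∈ perSet φ n, y ∈ bowenBall φ (n - m δ n) x δ) ∧
    Tendsto (fun δ : ℝ => Filter.limsup (fun n => (m δ n : ℝ≥0∞) / (n : ℝ≥0∞)) atTop)
      (𝓝[>] (0 : ℝ)) (nhds 0)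

/-- Specification property (S). -/
def SpecProp (φ : M → M) : Prop :=
  ∀ δ : ℝ, 0 < δ → ∃ N : ℕ, ∀ (r : ℕ) (a b : Fin r → ℕ) (pts : Fin r → M),
    (∀ i, a i ≤ b i) →
    (∀ i j, i ≠ j → ∀ k, a i ≤ k → k ≤ b i → ∀ l, a j ≤ l → l ≤ b j → N ≤ Nat.dist k l) →
    ∃ x : M, ∀ i, ∀ k, a i ≤ k → k ≤ b i → dist (φ^[k] x) (φ^[k] (pts i)) < δ

/-- Condition (PAP): finitely many periodic points and periodic approximation of pressure. -/
def PAP (φ : M → M) : Prop :=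
  (∀ n : ℕ, 0 < n → (perSet φ n).Finite) ∧
  ∀ G : ℕ → M → ℝ, AsympAdd φ G →
    Tendsto (fun n : ℕ => (((n : ℝ)⁻¹ : ℝ) : EReal) * ENNReal.log (perPartition φ G n)) atTop
      (nhds (pressure φ G))

/-- Condition (USCE): finite topological entropy and upper semicontinuous entropy map. -/
def USCE (φ : M → M) : Prop :=
  pressure φ (fun _ _ => (0 : ℝ)) ≠ ⊤ ∧
  UpperSemicontinuousOn (fun μ : ProbabilityMeasure M => ksEntropy φ (μ : Measure M))
    {μ : ProbabilityMeasure M | (μ : Measure M).map φ = (μ : Measure M)}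

/-- Empirical measure `μ_n^x`. -/
noncomputable def empMeas (φ : M → M) (n : ℕ) (x : M) : Measure M :=
  ((n : ℝ≥0∞))⁻¹ • ∑ i ∈ Finset.range n, Measure.dirac (φ^[i] x)

/-- Weak Gibbs property of `P` for `G`, with (finite, real) pressure `p`. -/
def WeakGibbs (φ : M → M) (G : ℕ → M → ℝ) (p : ℝ) (P : Measure M) : Prop :=
  ∃ K : ℕ → ℝ → ℝ,
    (∀ n : ℕ, ∀ ε : ℝ, 0 < ε → 1 ≤ K n ε) ∧
    (∀ n : ℕ, 0 < n → ∀ ε : ℝ, 0 < ε → ∀ x : M,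
      ENNReal.ofReal (Real.exp (G n x - n * p)) / ENNReal.ofReal (K n ε)
          ≤ P (bowenBall φ n x ε) ∧
      P (bowenBall φ n x ε)
          ≤ ENNReal.ofReal (K n ε) * ENNReal.ofReal (Real.exp (G n x - n * p))) ∧
    Tendsto (fun ε : ℝ => Filter.limsup (fun n => ENNReal.ofReal (Real.log (K n ε) / n)) atTop)
      (𝓝[>] (0 : ℝ)) (nhds 0)


/-!
Fix `x` and `ε`. Since `P` has full support, the open Bowen ball `B_n(x, ε/2)` contains a point `y`
at which the almost-everywhere bounds hold for the radii `ε/2` and `2ε`. As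
`B_n(y, ε/2) ⊆ B_n(x, ε) ⊆ B_n(y, 2ε)`, the bounds at `y` transfer to `x` with the constant
`K_n(ε/2) K_n(2ε) e^{V_n(ε)}`, where `V_n(ε)` bounds `|G_n x - G_n y|` on Bowen balls.
This costs nothing exponentially because `G` has tempered variation: `G_n` is within `o(n)` of the
Birkhoff sum `S_n G^(k)` of a uniformly continuous `G^(k)`, whose variation on `B_n(·, ε)` is at
most `n` times the modulus of continuity of `G^(k)` at `ε`.
-/

namespace ENNReal

/-- `ENNReal.limsup_add_le` needs a `CountableInterFilter`, which `atTop` is not. -/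
theorem limsup_add_le' {α : Type*} {f : Filter α} (u v : α → ℝ≥0∞) :
    limsup (u + v) f ≤ limsup u f + limsup v f := by
  refine ENNReal.le_of_forall_pos_le_add fun ε hε hlt => ?_
  obtain ⟨hu, hv⟩ := ENNReal.add_lt_top.1 hlt
  have hε2 : (ε : ℝ≥0∞) / 2 ≠ 0 := by simpa using hε.ne'
  refine limsup_le_of_le (by isBoundedDefault) ?_
  filter_upwards [eventually_lt_of_limsup_lt (ENNReal.lt_add_right hu.ne hε2),
    eventually_lt_of_limsup_lt (ENNReal.lt_add_right hv.ne hε2)] with x hux hvx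
  calc u x + v x ≤ limsup u f + ε / 2 + (limsup v f + ε / 2) := add_le_add hux.le hvx.le
    _ = limsup u f + limsup v f + ε := by rw [add_add_add_comm, ENNReal.add_halves]

theorem tendsto_nhds_zero_of_le_add {α : Type*} {l : Filter α} {f : α → ℝ≥0∞}
    {a : ℕ → ℝ≥0∞} {b : ℕ → α → ℝ≥0∞} (ha : Tendsto a atTop (𝓝 0))
    (hb : ∀ k, Tendsto (b k) l (𝓝 0)) (hf : ∀ k x, f x ≤ a k + b k x) :
    Tendsto f l (𝓝 0) := by
  refine ENNReal.tendsto_nhds_zero.2 fun η hη => ?_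
  have hη2 : 0 < η / 2 := ENNReal.half_pos hη.ne'
  obtain ⟨k, hk⟩ := (ENNReal.tendsto_nhds_zero.1 ha _ hη2).exists
  filter_upwards [ENNReal.tendsto_nhds_zero.1 (hb k) _ hη2] with x hx
  calc f x ≤ a k + b k x := hf k x
    _ ≤ η / 2 + η / 2 := add_le_add hk hx
    _ = η := ENNReal.add_halves η

theorem ofReal_exp_div_le_of_le_add {s t V K₁ K₂ : ℝ} (hst : s ≤ t + V) (hK₁ : 0 < K₁)
    (hK₂ : 1 ≤ K₂) :
    ENNReal.ofReal (Real.exp s) / ENNReal.ofReal (K₁ * K₂ * Real.exp V)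
      ≤ ENNReal.ofReal (Real.exp t) / ENNReal.ofReal K₁ := by
  have hK : 0 < K₁ * K₂ * Real.exp V := by have := Real.exp_pos V; positivity
  rw [← ENNReal.ofReal_div_of_pos hK, ← ENNReal.ofReal_div_of_pos hK₁]
  refine ENNReal.ofReal_le_ofReal ((div_le_div_iff₀ hK hK₁).2 ?_)
  calc Real.exp s * K₁ ≤ Real.exp (t + V) * K₁ := by gcongr
    _ ≤ Real.exp (t + V) * K₁ * K₂ := le_mul_of_one_le_right (by positivity) hK₂
    _ = Real.exp t * (K₁ * K₂ * Real.exp V) := by rw [Real.exp_add]; ring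

theorem ofReal_mul_exp_le_of_le_add {s t V K₁ K₂ : ℝ} (hts : t ≤ s + V) (hK₁ : 1 ≤ K₁)
    (hK₂ : 0 ≤ K₂) :
    ENNReal.ofReal K₂ * ENNReal.ofReal (Real.exp t)
      ≤ ENNReal.ofReal (K₁ * K₂ * Real.exp V) * ENNReal.ofReal (Real.exp s) := by
  rw [← ENNReal.ofReal_mul hK₂, ← ENNReal.ofReal_mul (by positivity)]
  refine ENNReal.ofReal_le_ofReal ?_
  calc K₂ * Real.exp t ≤ K₂ * Real.exp (s + V) := by gcongr
    _ ≤ K₁ * (K₂ * Real.exp (s + V)) := le_mul_of_one_le_left (by positivity) hK₁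
    _ = K₁ * K₂ * Real.exp V * Real.exp s := by rw [Real.exp_add]; ring

end ENNReal

section BowenBall

variable {X : Type*} [MetricSpace X] {φ : X → X} {n : ℕ} {x y : X} {ε δ η : ℝ}

theorem isOpen_bowenBall (hφ : Continuous φ) : IsOpen (bowenBall φ n x ε) := by
  have h : bowenBall φ n x ε = ⋂ k ∈ Finset.range n, φ^[k] ⁻¹' Metric.ball (φ^[k] x) ε := by
    ext; simp [bowenBall]
  rw [h]
  exact isOpen_biInter_finset fun k _ => Metric.isOpen_ball.preimage (hφ.iterate k)

theorem mem_bowenBall_self (hε : 0 < ε) : x ∈ bowenBall φ n x ε :=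
  fun k _ => by simpa using hε

theorem mem_bowenBall_comm : y ∈ bowenBall φ n x ε ↔ x ∈ bowenBall φ n y ε := by
  simp only [bowenBall, mem_ofPred_eq, dist_comm]

theorem bowenBall_mono (h : ε ≤ δ) : bowenBall φ n x ε ⊆ bowenBall φ n x δ :=
  fun _ hz k hk => (hz k hk).trans_le h

theorem bowenBall_subset_bowenBall_of_mem (hy : y ∈ bowenBall φ n x δ) (h : ε + δ ≤ η) :
    bowenBall φ n y ε ⊆ bowenBall φ n x η := fun z hz k hk =>
  calc dist (φ^[k] z) (φ^[k] x) ≤ dist (φ^[k] z) (φ^[k] y) + dist (φ^[k] y) (φ^[k] x) :=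
        dist_triangle _ _ _
    _ < ε + δ := add_lt_add (hz k hk) (hy k hk)
    _ ≤ η := h

theorem gibbs_bounds_of_mem_bowenBall [MeasurableSpace X] {μ : Measure X} {g : X → ℝ}
    {V K₁ K₂ : ℝ} (hε : 0 < ε) (hy : y ∈ bowenBall φ n x (2⁻¹ * ε)) (hV : |g x - g y| ≤ V)
    (hK₁ : 1 ≤ K₁) (hK₂ : 1 ≤ K₂)
    (hlow : ENNReal.ofReal (Real.exp (g y)) / ENNReal.ofReal K₁ ≤ μ (bowenBall φ n y (2⁻¹ * ε)))
    (hup : μ (bowenBall φ n y (2 * ε)) ≤ ENNReal.ofReal K₂ * ENNReal.ofReal (Real.exp (g y))) :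
    ENNReal.ofReal (Real.exp (g x)) / ENNReal.ofReal (K₁ * K₂ * Real.exp V)
        ≤ μ (bowenBall φ n x ε) ∧
      μ (bowenBall φ n x ε)
        ≤ ENNReal.ofReal (K₁ * K₂ * Real.exp V) * ENNReal.ofReal (Real.exp (g x)) := by
  obtain ⟨hVlow, hVup⟩ := abs_le.1 hV
  constructor
  · calc ENNReal.ofReal (Real.exp (g x)) / ENNReal.ofReal (K₁ * K₂ * Real.exp V)
        ≤ ENNReal.ofReal (Real.exp (g y)) / ENNReal.ofReal K₁ :=
          ENNReal.ofReal_exp_div_le_of_le_add (by linarith) (by linarith) hK₂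
      _ ≤ μ (bowenBall φ n y (2⁻¹ * ε)) := hlow
      _ ≤ μ (bowenBall φ n x ε) :=
          measure_mono (bowenBall_subset_bowenBall_of_mem hy (by linarith))
  · calc μ (bowenBall φ n x ε) ≤ μ (bowenBall φ n y (2 * ε)) :=
          measure_mono (bowenBall_subset_bowenBall_of_mem (mem_bowenBall_comm.1 hy) (by linarith))
      _ ≤ ENNReal.ofReal K₂ * ENNReal.ofReal (Real.exp (g y)) := hup
      _ ≤ ENNReal.ofReal (K₁ * K₂ * Real.exp V) * ENNReal.ofReal (Real.exp (g x)) :=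
          ENNReal.ofReal_mul_exp_le_of_le_add (by linarith) hK₁ (by linarith)

end BowenBall

section Variation

variable {X : Type*}

theorem ofReal_abs_le_supNorm (f : X → ℝ) (x : X) : ENNReal.ofReal |f x| ≤ supNorm f :=
  le_iSup (fun x => ENNReal.ofReal |f x|) x

variable [MetricSpace X]

noncomputable def bowenVariation (φ : X → X) (g : X → ℝ) (n : ℕ) (ε : ℝ) : ℝ≥0∞ :=
  ⨆ (x : X) (y ∈ bowenBall φ n x ε), ENNReal.ofReal |g x - g y|

noncomputable def uniformModulus (g : X → ℝ) (ε : ℝ) : ℝ≥0∞ :=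
  ⨆ (x : X) (y : X) (_ : dist x y < ε), ENNReal.ofReal |g x - g y|

variable {φ : X → X} {n : ℕ} {ε : ℝ} {x y : X}

theorem ofReal_abs_sub_le_bowenVariation (g : X → ℝ) (hy : y ∈ bowenBall φ n x ε) :
    ENNReal.ofReal |g x - g y| ≤ bowenVariation φ g n ε :=
  le_iSup₂_of_le (f := fun x y => ⨆ (_ : y ∈ bowenBall φ n x ε), ENNReal.ofReal |g x - g y|) x y
    (le_iSup_of_le hy le_rfl)

theorem abs_sub_le_toReal_bowenVariation {g : X → ℝ} {C : ℝ} (hg : ∀ x, |g x| ≤ C)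
    (hy : y ∈ bowenBall φ n x ε) : |g x - g y| ≤ (bowenVariation φ g n ε).toReal := by
  have hfin : bowenVariation φ g n ε ≠ ⊤ := by
    refine ne_top_of_le_ne_top (b := ENNReal.ofReal (C + C)) ENNReal.ofReal_ne_top
      (iSup₂_le fun x y => iSup_le fun _ => ?_)
    exact ENNReal.ofReal_le_ofReal ((abs_sub _ _).trans (add_le_add (hg x) (hg y)))
  simpa using ENNReal.toReal_mono hfin (ofReal_abs_sub_le_bowenVariation g hy)

theorem bowenVariation_le_add (f g : X → ℝ) :
    bowenVariation φ f n ε ≤ 2 * supNorm (fun x => f x - g x) + bowenVariation φ g n ε := by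
  refine iSup₂_le fun x y => iSup_le fun hy => ?_
  have hsplit : |f x - f y| ≤ |f x - g x| + |f y - g y| + |g x - g y| := by
    have h₁ := abs_sub_le (f x) (g x) (f y)
    have h₂ := abs_sub_le (g x) (g y) (f y)
    rw [abs_sub_comm (g y)] at h₂
    linarith
  calc ENNReal.ofReal |f x - f y|
      ≤ ENNReal.ofReal |f x - g x| + ENNReal.ofReal |f y - g y| + ENNReal.ofReal |g x - g y| := by
        refine (ENNReal.ofReal_le_ofReal hsplit).trans ?_
        exact ENNReal.ofReal_add_le.trans (add_le_add ENNReal.ofReal_add_le le_rfl)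
    _ ≤ supNorm (fun x => f x - g x) + supNorm (fun x => f x - g x) + bowenVariation φ g n ε := by
        gcongr
        · exact ofReal_abs_le_supNorm (fun x => f x - g x) x
        · exact ofReal_abs_le_supNorm (fun x => f x - g x) y
        · exact ofReal_abs_sub_le_bowenVariation g hy
    _ = 2 * supNorm (fun x => f x - g x) + bowenVariation φ g n ε := by rw [two_mul]

theorem bowenVariation_birkhoff_le (g : X → ℝ) :
    bowenVariation φ (birkhoff φ g n) n ε ≤ n * uniformModulus g ε := by
  refine iSup₂_le fun x y => iSup_le fun hy => ?_
  have hterm : ∀ k ∈ Finset.range n,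
      ENNReal.ofReal |g (φ^[k] x) - g (φ^[k] y)| ≤ uniformModulus g ε := fun k hk =>
    le_iSup₂_of_le (f := fun a b => ⨆ (_ : dist a b < ε), ENNReal.ofReal |g a - g b|)
      (φ^[k] x) (φ^[k] y)
      (le_iSup_of_le (by rw [dist_comm]; exact hy k (Finset.mem_range.1 hk)) le_rfl)
  calc ENNReal.ofReal |birkhoff φ g n x - birkhoff φ g n y|
      ≤ ENNReal.ofReal (∑ k ∈ Finset.range n, |g (φ^[k] x) - g (φ^[k] y)|) := by
        rw [birkhoff, birkhoff, ← Finset.sum_sub_distrib]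
        exact ENNReal.ofReal_le_ofReal (Finset.abs_sum_le_sum_abs _ _)
    _ = ∑ k ∈ Finset.range n, ENNReal.ofReal |g (φ^[k] x) - g (φ^[k] y)| :=
        ENNReal.ofReal_sum_of_nonneg fun _ _ => abs_nonneg _
    _ ≤ ∑ _k ∈ Finset.range n, uniformModulus g ε := Finset.sum_le_sum hterm
    _ = n * uniformModulus g ε := by simp

theorem tendsto_uniformModulus {g : X → ℝ} (hg : UniformContinuous g) :
    Tendsto (uniformModulus g) (𝓝 0) (𝓝 0) := by
  refine ENNReal.tendsto_nhds_zero.2 fun η hη => ?_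
  obtain ⟨r, hr, hrη⟩ := ENNReal.lt_iff_exists_nnreal_btwn.1 hη
  obtain ⟨δ, hδ, hgδ⟩ := Metric.uniformContinuous_iff.1 hg r (by exact_mod_cast hr)
  filter_upwards [Iio_mem_nhds hδ] with ε hε
  refine le_trans (iSup₂_le fun a b => iSup_le fun hab => ?_) hrη.le
  rw [← ENNReal.ofReal_coe_nnreal, ← Real.dist_eq]
  exact ENNReal.ofReal_le_ofReal (hgδ (hab.trans hε)).le

theorem limsup_bowenVariation_div_le (G : ℕ → X → ℝ) (g : X → ℝ) (ε : ℝ) :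
    limsup (fun n => bowenVariation φ (G n) n ε / n) atTop
      ≤ 2 * limsup (fun n => supNorm (fun x => G n x - birkhoff φ g n x) / n) atTop
        + uniformModulus g ε := by
  have hle : ∀ᶠ n : ℕ in atTop, bowenVariation φ (G n) n ε / n
      ≤ 2 * (supNorm (fun x => G n x - birkhoff φ g n x) / n) + uniformModulus g ε := by
    filter_upwards [eventually_ne_atTop 0] with n hn
    calc bowenVariation φ (G n) n ε / n
        ≤ (2 * supNorm (fun x => G n x - birkhoff φ g n x) + n * uniformModulus g ε) / n := by
          gcongr
          exact (bowenVariation_le_add _ _).trans (add_le_add le_rfl (bowenVariation_birkhoff_le g))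
      _ = 2 * (supNorm (fun x => G n x - birkhoff φ g n x) / n) + uniformModulus g ε := by
          rw [ENNReal.add_div, mul_div_assoc, mul_comm (n : ℝ≥0∞),
            ENNReal.mul_div_cancel_right (by simpa) (ENNReal.natCast_ne_top n)]
  calc limsup (fun n => bowenVariation φ (G n) n ε / n) atTop
      ≤ limsup (fun n => 2 * (supNorm (fun x => G n x - birkhoff φ g n x) / n)
          + uniformModulus g ε) atTop := limsup_le_limsup hle
    _ = 2 * limsup (fun n => supNorm (fun x => G n x - birkhoff φ g n x) / n) atTop
          + uniformModulus g ε := by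
        rw [limsup_add_const atTop _ _ (by isBoundedDefault) (by isBoundedDefault),
          ENNReal.limsup_const_mul_of_ne_top ENNReal.ofNat_ne_top]

/-- Asymptotically additive sequences have tempered variation on Bowen balls. -/
theorem tendsto_limsup_bowenVariation_div {G : ℕ → X → ℝ} {Gk : ℕ → X → ℝ}
    (hGk : ∀ k, UniformContinuous (Gk k)) (hG : ApproxSeq φ G Gk) :
    Tendsto (fun ε => limsup (fun n => bowenVariation φ (G n) n ε / n) atTop) (𝓝 0) (𝓝 0) :=
  ENNReal.tendsto_nhds_zero_of_le_add
    (by simpa using ENNReal.Tendsto.const_mul (a := 2) hG (by simp))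
    (fun k => tendsto_uniformModulus (hGk k)) fun k ε => limsup_bowenVariation_div_le G (Gk k) ε

end Variation

def SubexpGrowth (K : ℕ → ℝ → ℝ) : Prop :=
  Tendsto (fun ε : ℝ => limsup (fun n : ℕ => ENNReal.ofReal (Real.log (K n ε) / n)) atTop)
    (𝓝[>] (0 : ℝ)) (𝓝 0)

namespace SubexpGrowth

variable {K K₁ K₂ : ℕ → ℝ → ℝ}

theorem comp_mul_left (h : SubexpGrowth K) {c : ℝ} (hc : 0 < c) :
    SubexpGrowth fun n ε => K n (c * ε) :=
  h.comp (tendsto_iff_comap.2 (comap_mulLeft_nhdsGT_zero hc).ge)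

theorem mul (h₁ : SubexpGrowth K₁) (h₂ : SubexpGrowth K₂) (hK₁ : ∀ n ε, 0 < ε → 0 < K₁ n ε)
    (hK₂ : ∀ n ε, 0 < ε → 0 < K₂ n ε) : SubexpGrowth fun n ε => K₁ n ε * K₂ n ε := by
  refine tendsto_of_tendsto_of_tendsto_of_le_of_le' tendsto_const_nhds
    (by simpa using h₁.add h₂) (Eventually.of_forall fun _ => zero_le) ?_
  filter_upwards [self_mem_nhdsWithin] with ε (hε : 0 < ε)
  refine (limsup_le_limsup (Eventually.of_forall fun n => ?_)).trans (ENNReal.limsup_add_le' _ _)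
  rw [Real.log_mul (hK₁ n ε hε).ne' (hK₂ n ε hε).ne', add_div]
  exact ENNReal.ofReal_add_le

theorem exp_toReal {V : ℕ → ℝ → ℝ≥0∞}
    (hV : Tendsto (fun ε => limsup (fun n => V n ε / n) atTop) (𝓝[>] 0) (𝓝 0)) :
    SubexpGrowth fun n ε => Real.exp (V n ε).toReal := by
  refine tendsto_of_tendsto_of_tendsto_of_le_of_le tendsto_const_nhds hV (fun _ => zero_le)
    fun ε => limsup_le_limsup (Eventually.of_forall fun n => ?_)
  calc ENNReal.ofReal (Real.log (Real.exp (V n ε).toReal) / n)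
      ≤ ENNReal.ofReal (V n ε).toReal / ENNReal.ofReal n := by
        rw [Real.log_exp]; exact ENNReal.ofReal_div_le n.cast_nonneg
    _ ≤ V n ε / n := by rw [ENNReal.ofReal_natCast]; gcongr; exact ENNReal.ofReal_toReal_le

end SubexpGrowth

theorem weakGibbs_of_ae_bounds_general
    {M : Type*} [MetricSpace M] [CompactSpace M] [MeasurableSpace M]
    (φ : M → M) (hφ : Continuous φ)
    (G : ℕ → M → ℝ) (hG : AsympAdd φ G)
    (p : ℝ)
    (P : Measure M)
    (hsupp : ∀ U : Set M, IsOpen U → U.Nonempty → 0 < P U)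
    (K : ℕ → ℝ → ℝ)
    (hK1 : ∀ n : ℕ, ∀ ε : ℝ, 0 < ε → 1 ≤ K n ε)
    (hKlim : Tendsto
      (fun ε : ℝ => Filter.limsup (fun n : ℕ => ENNReal.ofReal (Real.log (K n ε) / n)) atTop)
      (𝓝[>] (0 : ℝ)) (nhds 0))
    (hae : ∀ n : ℕ, 0 < n → ∀ ε : ℝ, 0 < ε →
      ∀ᵐ x ∂P,
        ENNReal.ofReal (Real.exp (G n x - n * p)) / ENNReal.ofReal (K n ε)
            ≤ P (bowenBall φ n x ε) ∧
        P (bowenBall φ n x ε)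
            ≤ ENNReal.ofReal (K n ε) * ENNReal.ofReal (Real.exp (G n x - n * p))) :
    WeakGibbs φ G p P := by
  obtain ⟨hGbdd, Gk, hGk, hGGk⟩ := hG
  have : P.IsOpenPosMeasure := ⟨fun U hU hne => (hsupp U hU hne).ne'⟩
  have hK : SubexpGrowth K := hKlim
  have hKpos : ∀ c, 0 < c → ∀ n ε, 0 < ε → 0 < K n (c * ε) := fun c hc n ε hε =>
    one_pos.trans_le (hK1 n _ (mul_pos hc hε))
  refine ⟨fun n ε => K n (2⁻¹ * ε) * K n (2 * ε) * Real.exp (bowenVariation φ (G n) n ε).toReal,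
    fun n ε hε => ?_, fun n hn ε hε x => ?_, ?_⟩
  · exact one_le_mul_of_one_le_of_one_le
      (one_le_mul_of_one_le_of_one_le (hK1 n _ (by positivity)) (hK1 n _ (by positivity)))
      (Real.one_le_exp ENNReal.toReal_nonneg)
  · have hgood := (hae n hn (2⁻¹ * ε) (by positivity)).and (hae n hn (2 * ε) (by positivity))
    obtain ⟨y, ⟨⟨hlow, -⟩, -, hup⟩, hy⟩ := (Measure.dense_of_ae hgood).exists_mem_open
      (isOpen_bowenBall hφ) ⟨x, mem_bowenBall_self (n := n) (ε := 2⁻¹ * ε) (by positivity)⟩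
    obtain ⟨C, hC⟩ := (hGbdd n).2
    have hV := abs_sub_le_toReal_bowenVariation hC (bowenBall_mono (δ := ε) (by linarith) hy)
    exact gibbs_bounds_of_mem_bowenBall (g := fun x => G n x - n * p) hε hy (by simpa using hV)
      (hK1 n _ (by positivity)) (hK1 n _ (by positivity)) hlow hup
  · have hVar := tendsto_limsup_bowenVariation_div
      (fun k => CompactSpace.uniformContinuous_of_continuous (hGk k)) hGGk
    exact ((hK.comp_mul_left (by norm_num)).mul (hK.comp_mul_left two_pos)
      (hKpos _ (by norm_num)) (hKpos 2 two_pos)).mul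
      (SubexpGrowth.exp_toReal (hVar.mono_left nhdsWithin_le_nhds))
      (fun n ε hε => mul_pos (hKpos _ (by norm_num) n ε hε) (hKpos 2 two_pos n ε hε))
      fun _ _ _ => Real.exp_pos _

/-- **Almost-everywhere Gibbs bounds plus full support imply the weak Gibbs property.**
Let `G` be asymptotically additive with (finite) pressure `p`, and let `P` be a Borel
probability measure with full support.  If for every `n ≥ 1` and `ε > 0` the two-sided
bound `K_n(ε)^{-1} e^{G_n(x) − n p} ≤ P(B_n(x,ε)) ≤ K_n(ε) e^{G_n(x) − n p}` holds for
`P`-almost every `x`, with constants `K_n(ε) ≥ 1` satisfying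
`lim_{ε↓0} limsup_n (1/n) log K_n(ε) = 0`, then `P` is a weak Gibbs measure for `G`. -/
theorem weakGibbs_of_ae_bounds
    {M : Type*} [MetricSpace M] [CompactSpace M] [MeasurableSpace M] [BorelSpace M]
    (φ : M → M) (hφ : Continuous φ)
    (G : ℕ → M → ℝ) (hG : AsympAdd φ G)
    (p : ℝ) (hp : pressure φ G = (p : EReal))
    (P : Measure M) [IsProbabilityMeasure P]
    (hsupp : ∀ U : Set M, IsOpen U → U.Nonempty → 0 < P U)
    (K : ℕ → ℝ → ℝ)
    (hK1 : ∀ n : ℕ, ∀ ε : ℝ, 0 < ε → 1 ≤ K n ε)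
    (hKlim : Tendsto
      (fun ε : ℝ => Filter.limsup (fun n : ℕ => ENNReal.ofReal (Real.log (K n ε) / n)) atTop)
      (𝓝[>] (0 : ℝ)) (nhds 0))
    (hae : ∀ n : ℕ, 0 < n → ∀ ε : ℝ, 0 < ε →
      ∀ᵐ x ∂P,
        ENNReal.ofReal (Real.exp (G n x - n * p)) / ENNReal.ofReal (K n ε)
            ≤ P (bowenBall φ n x ε) ∧
        P (bowenBall φ n x ε)
            ≤ ENNReal.ofReal (K n ε) * ENNReal.ofReal (Real.exp (G n x - n * p))) :
    WeakGibbs φ G p P :=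
  weakGibbs_of_ae_bounds_general φ hφ G hG p P hsupp K hK1 hKlim hae
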